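/- arXiv:2412.09717 — 4 statements merged into one kernel-verified Lean document; each statement's English description precedes it below -/
import Mathlib

section
/- Let φ be a hitting CNF formula with clause set 𝒞 over n variables, where clause C mentions the variable set vars(C). Then the number of assignments that falsify at least one clause of φ equals ∑_{C ∈ 𝒞} 2^{n − |vars(C)|}. Consequently, φ is satisfiable if and only if ∑_{C ∈ 𝒞} 2^{n − |vars(C)|} < 2^n. -/
/-!
The assignments falsifying a clause `C` are exactly those agreeing on `vars C` with the one
assignment that is false on `P_C` and true on `N_C`: a subcube of `2 ^ (n - |vars C|)` points.
The hitting condition says that the subcubes of distinct clauses are disjoint, so the falsified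
assignments are counted by the sum, and the formula is satisfiable iff these subcubes do not
cover all `2 ^ n` assignments.
-/

open scoped Classical

open Finset

theorem Fintype.card_filter_forall_mem_eq {α β : Type*} [Fintype α] [DecidableEq α]
    [Fintype β] [DecidableEq β] (S : Finset α) (g : α → β) :
    #{f : α → β | ∀ x ∈ S, f x = g x} = Fintype.card β ^ (Fintype.card α - #S) := by
  have hpi : ({f : α → β | ∀ x ∈ S, f x = g x} : Finset (α → β))
      = Fintype.piFinset fun x => if x ∈ S then {g x} else univ := by
    ext f
    simp only [mem_filter, mem_univ, true_and, Fintype.mem_piFinset]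
    refine ⟨fun h x => ?_, fun h x hx => by simpa [hx] using h x⟩
    by_cases hx : x ∈ S <;> simp [hx, h]
  simp only [hpi, Fintype.card_piFinset, apply_ite Finset.card, card_singleton, card_univ]
  rw [prod_ite, prod_const_one, one_mul, prod_const, filter_not,
    card_sdiff_of_subset (filter_subset _ _)]
  simp

section Clause

variable {V : Type*} [Fintype V] [DecidableEq V]

def falsifyingAssignments (C : Finset V × Finset V) : Finset (V → Bool) :=
  {σ | (∀ x ∈ C.1, σ x = false) ∧ (∀ x ∈ C.2, σ x = true)}

theorem falsifyingAssignments_eq_filter_forall_mem {C : Finset V × Finset V}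
    (hC : Disjoint C.1 C.2) :
    falsifyingAssignments C
      = ({σ | ∀ x ∈ C.1 ∪ C.2, σ x = decide (x ∈ C.2)} : Finset (V → Bool)) := by
  ext σ
  simp only [falsifyingAssignments, mem_filter, mem_univ, true_and, mem_union]
  constructor
  · rintro ⟨hP, hN⟩ x (hx | hx)
    · simp [hP x hx, disjoint_left.1 hC hx]
    · simp [hN x hx, hx]
  · intro h
    exact ⟨fun x hx => by simpa [disjoint_left.1 hC hx] using h x (.inl hx),
      fun x hx => by simpa [hx] using h x (.inr hx)⟩

theorem card_falsifyingAssignments {C : Finset V × Finset V} (hC : Disjoint C.1 C.2) :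
    #(falsifyingAssignments C) = 2 ^ (Fintype.card V - #(C.1 ∪ C.2)) := by
  rw [falsifyingAssignments_eq_filter_forall_mem hC, Fintype.card_filter_forall_mem_eq,
    Fintype.card_bool]

theorem disjoint_falsifyingAssignments {C C' : Finset V × Finset V}
    (hclash : (C.1 ∩ C'.2) ∪ (C.2 ∩ C'.1) ≠ ∅) :
    Disjoint (falsifyingAssignments C) (falsifyingAssignments C') := by
  obtain ⟨x, hx⟩ := nonempty_iff_ne_empty.2 hclash
  refine disjoint_left.2 fun σ hσ hσ' => ?_
  simp only [falsifyingAssignments, mem_filter, mem_univ, true_and] at hσ hσ'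
  rcases mem_union.1 hx with hx | hx <;> rw [mem_inter] at hx
  · simpa [hσ.1 x hx.1] using hσ'.2 x hx.2
  · simpa [hσ.2 x hx.1] using hσ'.1 x hx.2

end Clause

theorem hitting_count_falsifying_and_satisfiable_iff
    {V : Type*} [Fintype V] [DecidableEq V]
    (𝒞 : Finset (Finset V × Finset V))
    (hdisj : ∀ C ∈ 𝒞, Disjoint C.1 C.2)
    (hhit : ∀ C ∈ 𝒞, ∀ C' ∈ 𝒞, C ≠ C' → (C.1 ∩ C'.2) ∪ (C.2 ∩ C'.1) ≠ ∅) :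
    (Finset.univ.filter
        (fun σ : V → Bool => ∃ C ∈ 𝒞,
          (∀ x ∈ C.1, σ x = false) ∧ (∀ x ∈ C.2, σ x = true))).card
      = ∑ C ∈ 𝒞, 2 ^ (Fintype.card V - (C.1 ∪ C.2).card) ∧
    ((∃ σ : V → Bool, ∀ C ∈ 𝒞,
        ¬((∀ x ∈ C.1, σ x = false) ∧ (∀ x ∈ C.2, σ x = true))) ↔
      ∑ C ∈ 𝒞, 2 ^ (Fintype.card V - (C.1 ∪ C.2).card) < 2 ^ Fintype.card V) := by
  have hunion : (Finset.univ.filter fun σ : V → Bool => ∃ C ∈ 𝒞,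
      (∀ x ∈ C.1, σ x = false) ∧ (∀ x ∈ C.2, σ x = true)) = 𝒞.biUnion falsifyingAssignments := by
    ext σ
    simp [falsifyingAssignments]
  have hcount : #(𝒞.biUnion falsifyingAssignments)
      = ∑ C ∈ 𝒞, 2 ^ (Fintype.card V - #(C.1 ∪ C.2)) := by
    rw [card_biUnion fun C hC C' hC' hne => disjoint_falsifyingAssignments (hhit C hC C' hC' hne)]
    exact sum_congr rfl fun C hC => card_falsifyingAssignments (hdisj C hC)
  refine ⟨hunion ▸ hcount, ?_⟩
  have hcard_assignments : 2 ^ Fintype.card V = Fintype.card (V → Bool) := by simp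
  rw [← hcount, ← hunion, hcard_assignments, card_lt_iff_ne_univ, Ne, eq_univ_iff_forall]
  simp
end

section
/- Let U be a finite universe, 𝓕 a finite family of subsets of U, and k a natural number. There exists X ⊆ U with |X| = k such that |X ∩ S| is even for every S ∈ 𝓕, if and only if there exist two assignments σ₁, σ₂ : U → ZMod 2, each satisfying ∑_{u ∈ S} σ(u) = 0 for every S ∈ 𝓕, such that σ₁ and σ₂ differ on exactly k elements of U. -/
lemma indicator_sum_eq {U : Type*} [DecidableEq U] (X S : Finset U) :
    ∑ u ∈ S, (if u ∈ X then (1 : ZMod 2) else 0) = ((X ∩ S).card : ZMod 2) := by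
  rw [Finset.sum_ite_mem, Finset.sum_const, Finset.inter_comm]
  simp

theorem exact_even_set_iff_exact_differ_affine
    {U : Type*} [Fintype U] [DecidableEq U]
    (𝓕 : Finset (Finset U)) (k : ℕ) :
    (∃ X : Finset U, X.card = k ∧ ∀ S ∈ 𝓕, Even (X ∩ S).card) ↔
    (∃ σ₁ σ₂ : U → ZMod 2,
      (∀ S ∈ 𝓕, ∑ u ∈ S, σ₁ u = 0) ∧
      (∀ S ∈ 𝓕, ∑ u ∈ S, σ₂ u = 0) ∧
      (Finset.univ.filter (fun u => σ₁ u ≠ σ₂ u)).card = k) := by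
  constructor
  · rintro ⟨X, hk, hev⟩
    refine ⟨fun u => if u ∈ X then 1 else 0, fun _ => 0, ?_, by simp, ?_⟩
    · intro S hS
      rw [indicator_sum_eq]
      rw [ZMod.natCast_eq_zero_iff]
      exact (hev S hS).two_dvd
    · rw [← hk]
      congr 1
      ext u
      simp only [Finset.mem_filter, Finset.mem_univ, true_and]
      by_cases h : u ∈ X <;> simp [h]
  · rintro ⟨σ₁, σ₂, h1, h2, hk⟩
    refine ⟨Finset.univ.filter (fun u => σ₁ u ≠ σ₂ u), hk, ?_⟩
    intro S hS
    have key : ∀ u, (if u ∈ Finset.univ.filter (fun u => σ₁ u ≠ σ₂ u) then (1 : ZMod 2) else 0) = σ₁ u - σ₂ u := by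
      intro u
      simp only [Finset.mem_filter, Finset.mem_univ, true_and]
      by_cases h : σ₁ u = σ₂ u
      · simp [h]
      · simp only [h, if_pos, ne_eq, not_false_iff, if_true]
        have := ZMod.val_lt (σ₁ u)
        have := ZMod.val_lt (σ₂ u)
        revert h; generalize σ₁ u = a; generalize σ₂ u = b; revert a b; decide
    have : ((Finset.univ.filter (fun u => σ₁ u ≠ σ₂ u) ∩ S).card : ZMod 2) = 0 := by
      rw [← indicator_sum_eq]
      simp only [key]
      rw [Finset.sum_sub_distrib, h1 S hS, h2 S hS, sub_zero]
    rw [ZMod.natCast_eq_zero_iff] at this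
    exact (even_iff_two_dvd).2 this
end

section
/- Let G be a finite simple graph and k a natural number. Construct a monotone 2-CNF φ over variables {x_v, y_v : v ∈ V(G)} with clauses x_u ∨ x_v and y_u ∨ y_v for every edge uv ∈ E(G), and x_u ∨ y_v for every pair u, v ∈ V(G). Then G has an independent set of size at least k if and only if φ has two satisfying assignments that differ on at least 2k variables. -/
/-!
In a model of the formula, the false `x`-variables and the false `y`-variables each form an
independent set (the edge clauses), and the clauses `x_u ∨ y_v` forbid false variables on both
sides; so a model falsifies a copy of one independent set. Two models differ only on variables
one of them falsifies, hence on at most `2 α(G)` variables. Conversely, falsifying an independent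
set `I` on the `x`-side in one model and on the `y`-side in the other gives `2 |I|` differences.
-/

open Finset

namespace MaxDiffer2SAT

theorem card_filter_ne_le_card_filter_eq_false_add {α : Type*} [Fintype α] [DecidableEq α]
    (σ₁ σ₂ : α → Bool) :
    #(univ.filter fun z => σ₁ z ≠ σ₂ z) ≤
      #(univ.filter (σ₁ · = false)) + #(univ.filter (σ₂ · = false)) :=
  calc #(univ.filter fun z => σ₁ z ≠ σ₂ z)
      ≤ #(univ.filter fun z => σ₁ z = false ∨ σ₂ z = false) :=
        card_le_card <| monotone_filter_right _ fun z => by cases σ₁ z <;> cases σ₂ z <;> simp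
    _ ≤ _ := by rw [filter_or]; exact card_union_le _ _

variable {V : Type*} (G : SimpleGraph V)

/-- The formula of the reduction, with `x_v` encoded as `Sum.inl v` and `y_v` as `Sum.inr v`. -/
def Satisfies (σ : V ⊕ V → Bool) : Prop :=
  (∀ u v, G.Adj u v → σ (Sum.inl u) = true ∨ σ (Sum.inl v) = true) ∧
  (∀ u v, G.Adj u v → σ (Sum.inr u) = true ∨ σ (Sum.inr v) = true) ∧
  (∀ u v : V, σ (Sum.inl u) = true ∨ σ (Sum.inr v) = true)

variable {G}

theorem forall_adj_or_iff_isIndepSet {f : V → Bool} :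
    (∀ u v, G.Adj u v → f u = true ∨ f v = true) ↔ G.IsIndepSet {v | f v = false} := by
  simp only [SimpleGraph.isIndepSet_iff, Set.Pairwise, Set.mem_ofPred_eq]
  constructor
  · intro h u hu v hv _ huv
    simpa [hu, hv] using h u v huv
  · intro h u v huv
    by_contra! hfalse
    simp only [ne_eq, Bool.not_eq_true] at hfalse
    exact h hfalse.1 hfalse.2 (G.ne_of_adj huv) huv

theorem satisfies_iff {σ : V ⊕ V → Bool} :
    Satisfies G σ ↔ G.IsIndepSet {v | σ (Sum.inl v) = false} ∧
      G.IsIndepSet {v | σ (Sum.inr v) = false} ∧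
      ((∀ u, σ (Sum.inl u) = true) ∨ ∀ v, σ (Sum.inr v) = true) :=
  and_congr forall_adj_or_iff_isIndepSet <| and_congr forall_adj_or_iff_isIndepSet <|
    (forall_congr' fun _ => forall_or_left).trans forall_or_right

variable [Fintype V]

theorem exists_isIndepSet_card_filter_eq_false {σ : V ⊕ V → Bool} (hσ : Satisfies G σ) :
    ∃ I : Finset V, G.IsIndepSet I ∧ #(univ.filter (σ · = false)) = #I := by
  obtain ⟨hl, hr, hlr⟩ := satisfies_iff.1 hσ
  set F := univ.filter (σ · = false)
  rw [← card_toLeft_add_card_toRight (u := F)]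
  rcases hlr with hl_true | hr_true
  · have hF : F.toLeft = ∅ := by ext; simp [F, hl_true]
    refine ⟨F.toRight, ?_, by simp [hF]⟩
    convert hr using 1; ext; simp [F]
  · have hF : F.toRight = ∅ := by ext; simp [F, hr_true]
    refine ⟨F.toLeft, ?_, by simp [hF]⟩
    convert hl using 1; ext; simp [F]

theorem exists_satisfies_card_filter_ne_eq [DecidableEq V] {I : Finset V}
    (hI : G.IsIndepSet I) :
    ∃ σ₁ σ₂ : V ⊕ V → Bool, Satisfies G σ₁ ∧ Satisfies G σ₂ ∧
      #(univ.filter fun z => σ₁ z ≠ σ₂ z) = 2 * #I := by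
  have hfalse : {v | decide (v ∉ I) = false} = (I : Set V) := by ext; simp
  have hnone : G.IsIndepSet {v : V | true = false} := by simp
  refine ⟨Sum.elim (fun v => decide (v ∉ I)) fun _ => true,
    Sum.elim (fun _ => true) fun v => decide (v ∉ I),
    satisfies_iff.2 ⟨hfalse ▸ hI, hnone, Or.inr fun _ => rfl⟩,
    satisfies_iff.2 ⟨hnone, hfalse ▸ hI, Or.inl fun _ => rfl⟩, ?_⟩
  have hdiffer : univ.filter (fun z => Sum.elim (fun v => decide (v ∉ I)) (fun _ => true) z ≠
      Sum.elim (fun _ => true) (fun v => decide (v ∉ I)) z) = I.disjSum I := by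
    ext z; cases z <;> simp
  rw [hdiffer, card_disjSum, two_mul]

end MaxDiffer2SAT

open MaxDiffer2SAT in
theorem independent_set_iff_max_differ_2sat_general
    {V : Type*} [Fintype V]
    (G : SimpleGraph V) (k : ℕ) :
    (∃ X : Finset V, k ≤ X.card ∧ ∀ u ∈ X, ∀ v ∈ X, ¬G.Adj u v) ↔
    (∃ σ₁ σ₂ : V ⊕ V → Bool,
      ((∀ u v, G.Adj u v → σ₁ (Sum.inl u) = true ∨ σ₁ (Sum.inl v) = true) ∧
       (∀ u v, G.Adj u v → σ₁ (Sum.inr u) = true ∨ σ₁ (Sum.inr v) = true) ∧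
       (∀ u v : V, σ₁ (Sum.inl u) = true ∨ σ₁ (Sum.inr v) = true)) ∧
      ((∀ u v, G.Adj u v → σ₂ (Sum.inl u) = true ∨ σ₂ (Sum.inl v) = true) ∧
       (∀ u v, G.Adj u v → σ₂ (Sum.inr u) = true ∨ σ₂ (Sum.inr v) = true) ∧
       (∀ u v : V, σ₂ (Sum.inl u) = true ∨ σ₂ (Sum.inr v) = true)) ∧
      2 * k ≤ (Finset.univ.filter (fun z : V ⊕ V => σ₁ z ≠ σ₂ z)).card) := by
  classical
  constructor
  · rintro ⟨I, hk, hI⟩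
    obtain ⟨σ₁, σ₂, h₁, h₂, hcard⟩ :=
      exists_satisfies_card_filter_ne_eq (G := G) (I := I) fun u hu v hv _ => hI u hu v hv
    exact ⟨σ₁, σ₂, h₁, h₂, hcard ▸ Nat.mul_le_mul_left 2 hk⟩
  · rintro ⟨σ₁, σ₂, h₁, h₂, hcard⟩
    obtain ⟨I₁, hI₁, hcard₁⟩ := exists_isIndepSet_card_filter_eq_false h₁
    obtain ⟨I₂, hI₂, hcard₂⟩ := exists_isIndepSet_card_filter_eq_false h₂
    have hsum := card_filter_ne_le_card_filter_eq_false_add σ₁ σ₂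
    obtain ⟨I, hI, hk⟩ : ∃ I : Finset V, G.IsIndepSet I ∧ k ≤ #I := by
      by_cases hk : k ≤ #I₁
      · exact ⟨I₁, hI₁, hk⟩
      · exact ⟨I₂, hI₂, by omega⟩
    exact ⟨I, hk, fun u hu v hv huv => hI hu hv (G.ne_of_adj huv) huv⟩

theorem independent_set_iff_max_differ_2sat
    {V : Type*} [Fintype V] [DecidableEq V]
    (G : SimpleGraph V) (k : ℕ) :
    (∃ X : Finset V, k ≤ X.card ∧ ∀ u ∈ X, ∀ v ∈ X, ¬G.Adj u v) ↔
    (∃ σ₁ σ₂ : V ⊕ V → Bool,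
      ((∀ u v, G.Adj u v → σ₁ (Sum.inl u) = true ∨ σ₁ (Sum.inl v) = true) ∧
       (∀ u v, G.Adj u v → σ₁ (Sum.inr u) = true ∨ σ₁ (Sum.inr v) = true) ∧
       (∀ u v : V, σ₁ (Sum.inl u) = true ∨ σ₁ (Sum.inr v) = true)) ∧
      ((∀ u v, G.Adj u v → σ₂ (Sum.inl u) = true ∨ σ₂ (Sum.inl v) = true) ∧
       (∀ u v, G.Adj u v → σ₂ (Sum.inr u) = true ∨ σ₂ (Sum.inr v) = true) ∧
       (∀ u v : V, σ₂ (Sum.inl u) = true ∨ σ₂ (Sum.inr v) = true)) ∧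
      2 * k ≤ (Finset.univ.filter (fun z : V ⊕ V => σ₁ z ≠ σ₂ z)).card) :=
  independent_set_iff_max_differ_2sat_general G k
end

section
/- Let U be a finite universe and 𝓕 a finite family of subsets of U, all of odd size. For k ≤ |U|, there exists X ⊆ U with |X| = k and |X ∩ S| odd for all S ∈ 𝓕 if and only if there exist two assignments σ₁, σ₂ : U → ZMod 2, each satisfying ∑_{u ∈ S} σ(u) = 1 for all S ∈ 𝓕, such that σ₁ and σ₂ overlap (agree) on exactly k elements of U. -/
lemma zmod2_add_eq_zero (a b : ZMod 2) : a + b = 0 ↔ a = b := by revert a b; decide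

lemma cast_card_odd (n : ℕ) (h : Odd n) : (n : ZMod 2) = 1 := by
  rw [← ZMod.natCast_mod n 2, Nat.odd_iff.mp h]
  rfl

theorem exact_odd_set_iff_overlap
    {U : Type*} [Fintype U] [DecidableEq U]
    (𝓕 : Finset (Finset U)) (hodd : ∀ S ∈ 𝓕, Odd S.card)
    (k : ℕ) (hk : k ≤ Fintype.card U) :
    (∃ X : Finset U, X.card = k ∧ ∀ S ∈ 𝓕, Odd (X ∩ S).card) ↔
    (∃ σ₁ σ₂ : U → ZMod 2,
      (∀ S ∈ 𝓕, ∑ u ∈ S, σ₁ u = 1) ∧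
      (∀ S ∈ 𝓕, ∑ u ∈ S, σ₂ u = 1) ∧
      (Finset.univ.filter (fun u => σ₁ u = σ₂ u)).card = k) := by
  constructor
  · rintro ⟨X, hXk, hX⟩
    refine ⟨fun _ => 1, fun u => if u ∈ X then 1 else 0, ?_, ?_, ?_⟩
    · intro S hS
      rw [Finset.sum_const, nsmul_eq_mul, mul_one]
      exact cast_card_odd _ (hodd S hS)
    · intro S hS
      rw [Finset.sum_ite_mem]
      rw [Finset.sum_const, nsmul_eq_mul, mul_one]
      rw [Finset.inter_comm]
      exact cast_card_odd _ (hX S hS)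
    · rw [← hXk]
      congr 1
      ext u
      simp only [Finset.mem_filter, Finset.mem_univ, true_and]
      by_cases h : u ∈ X <;> simp [h]
  · rintro ⟨σ₁, σ₂, h1, h2, hcard⟩
    refine ⟨Finset.univ.filter (fun u => σ₁ u = σ₂ u), hcard, ?_⟩
    intro S hS
    have hsum : ∑ u ∈ S, (σ₁ u + σ₂ u) = 0 := by
      rw [Finset.sum_add_distrib, h1 S hS, h2 S hS]
      decide
    have key : ((S.filter (fun u => ¬ σ₁ u = σ₂ u)).card : ZMod 2) = 0 := by
      rw [← hsum]
      rw [Finset.card_eq_sum_ones, Nat.cast_sum]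
      rw [Finset.sum_filter]
      apply Finset.sum_congr rfl
      intro u _
      by_cases h : σ₁ u = σ₂ u
      · simp [h]
        exact ((zmod2_add_eq_zero (σ₂ u) (σ₂ u)).mpr rfl).symm
      · have : σ₁ u + σ₂ u ≠ 0 := fun hc => h ((zmod2_add_eq_zero _ _).mp hc)
        simp only [h, if_false]
        push_cast
        revert this
        generalize σ₁ u + σ₂ u = x
        revert x
        decide
    have heven : Even (S.filter (fun u => ¬ σ₁ u = σ₂ u)).card := by
      rw [Nat.even_iff, ← Nat.dvd_iff_mod_eq_zero]
      exact (ZMod.natCast_eq_zero_iff _ 2).mp key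
    have hsplit : (S.filter (fun u => σ₁ u = σ₂ u)).card
        + (S.filter (fun u => ¬ σ₁ u = σ₂ u)).card = S.card :=
      Finset.card_filter_add_card_filter_not _
    have hXS : (Finset.univ.filter (fun u => σ₁ u = σ₂ u)) ∩ S
        = S.filter (fun u => σ₁ u = σ₂ u) := by
      ext u; simp [Finset.mem_filter, and_comm]
    rw [hXS]
    have hoddS := hodd S hS
    rw [Nat.odd_iff] at hoddS ⊢
    rw [Nat.even_iff] at heven
    omega
end
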